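/- Let n ≥ 1, let σ be an element of the hyperoctahedral group H_n, and let x ∈ Fin n × Bool. If the orbit of x under the cyclic group generated by σ has odd cardinality, then ι(x) does not belong to that orbit; in particular, the block projection (i, b) ↦ i is injective on the orbit of x. -/

import Mathlib

/-!
If `σ ^ m x = ι x`, then since `σ` commutes with the involution `ι` we get
`σ ^ (2 * m) x = ι (ι x) = x`, so the orbit length divides `2 * m`; being odd it divides `m`,
whence `ι x = σ ^ m x = x`, which is impossible. If two points of the orbit lay in one block they
would be exchanged by `ι`, and applying `ι` to the orbit of `x` would put `ι x` into it.
-/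

/-- The fixed-point-free involution `ι : (i, b) ↦ (i, ¬b)` on `Fin n × Bool`. -/
def hyperoctahedralInvolution (n : ℕ) : Equiv.Perm (Fin n × Bool) :=
  Function.Involutive.toPerm (fun x => (x.1, !x.2)) (fun x => by simp)

/-- The hyperoctahedral group `H_n = C₂ ≀ Sₙ`, modelled as the subgroup of the symmetric
group on `Fin n × Bool` consisting of all permutations commuting with `ι`. -/
def hyperoctahedralGroup (n : ℕ) : Subgroup (Equiv.Perm (Fin n × Bool)) :=
  Subgroup.centralizer {hyperoctahedralInvolution n}

open Function

namespace Equiv.Perm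

variable {α : Type*} {σ τ : Perm α} {x y : α}

theorem zpow_apply_eq_self_iff_minimalPeriod_dvd {k : ℤ} :
    (σ ^ k) x = x ↔ (minimalPeriod σ x : ℤ) ∣ k :=
  MulAction.zpow_smul_eq_iff_minimalPeriod_dvd (a := σ)

theorem ncard_setOf_sameCycle (σ : Perm α) (x : α) :
    {y | σ.SameCycle x y}.ncard = minimalPeriod σ x := by
  have horbit : {y | σ.SameCycle x y} = MulAction.orbit (Subgroup.zpowers σ) x := by
    ext y
    simp only [MulAction.mem_orbit_iff, Subtype.exists, Subgroup.mem_zpowers_iff, exists_prop,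
      exists_exists_eq_and, Subgroup.mk_smul]
    rfl
  rw [horbit, ← Nat.card_coe_set_eq, Nat.card_congr (MulAction.orbitZPowersEquiv σ x),
    Nat.card_zmod]
  rfl

theorem zpow_apply_eq_self_of_zpow_two_mul_of_odd {m : ℤ} (hodd : Odd (minimalPeriod σ x))
    (h : (σ ^ (2 * m)) x = x) : (σ ^ m) x = x := by
  rw [zpow_apply_eq_self_iff_minimalPeriod_dvd] at h ⊢
  exact (Int.isCoprime_two_right.mpr (by exact_mod_cast hodd)).dvd_of_dvd_mul_left h

theorem SameCycle.of_commute (hcomm : Commute τ σ) (h : σ.SameCycle x y) :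
    σ.SameCycle (τ x) (τ y) := by
  simpa only [hcomm.eq, mul_inv_cancel_right] using h.conj (g := τ)

theorem not_sameCycle_of_odd_minimalPeriod (hcomm : Commute τ σ) (hτ : τ (τ x) = x)
    (hne : τ x ≠ x) (hodd : Odd (minimalPeriod σ x)) : ¬σ.SameCycle x (τ x) := by
  rintro ⟨m, hm⟩
  have h2m : (σ ^ (2 * m)) x = x := by
    rw [two_mul, zpow_add, mul_apply, hm, ← mul_apply, ← (hcomm.zpow_right m).eq, mul_apply, hm,
      hτ]
  exact hne (hm ▸ zpow_apply_eq_self_of_zpow_two_mul_of_odd hodd h2m)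

end Equiv.Perm

@[simp]
theorem hyperoctahedralInvolution_apply (n : ℕ) (x : Fin n × Bool) :
    hyperoctahedralInvolution n x = (x.1, !x.2) :=
  rfl

theorem hyperoctahedralInvolution_apply_ne (n : ℕ) (x : Fin n × Bool) :
    hyperoctahedralInvolution n x ≠ x := by
  simp [Prod.ext_iff]

theorem hyperoctahedralInvolution_involutive (n : ℕ) :
    Involutive (hyperoctahedralInvolution n) :=
  Involutive.toPerm_involutive _

theorem eq_or_eq_hyperoctahedralInvolution_of_fst_eq {n : ℕ} {y z : Fin n × Bool}
    (h : y.1 = z.1) : z = y ∨ z = hyperoctahedralInvolution n y := by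
  obtain ⟨i, b⟩ := y
  obtain ⟨j, c⟩ := z
  simp only at h
  subst h
  cases b <;> cases c <;> simp

theorem odd_orbit_hyperoctahedral_general (n : ℕ)
    (σ : Equiv.Perm (Fin n × Bool)) (hσ : σ ∈ hyperoctahedralGroup n) (x : Fin n × Bool)
    (hodd : Odd (Set.ncard {y | ∃ k : ℤ, (σ ^ k) x = y})) :
    hyperoctahedralInvolution n x ∉ {y | ∃ k : ℤ, (σ ^ k) x = y} ∧
      Set.InjOn Prod.fst {y | ∃ k : ℤ, (σ ^ k) x = y} := by
  set ι := hyperoctahedralInvolution n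
  have hcomm : Commute ι σ := Subgroup.mem_centralizer_iff.mp hσ ι rfl
  change Odd {y | σ.SameCycle x y}.ncard at hodd
  rw [σ.ncard_setOf_sameCycle x] at hodd
  have hx : ¬σ.SameCycle x (ι x) := Equiv.Perm.not_sameCycle_of_odd_minimalPeriod hcomm
    (hyperoctahedralInvolution_involutive n x) (hyperoctahedralInvolution_apply_ne n x) hodd
  refine ⟨hx, fun y hy z hz hyz => ?_⟩
  obtain rfl | rfl := eq_or_eq_hyperoctahedralInvolution_of_fst_eq hyz
  · rfl
  · have hz : σ.SameCycle x (ι y) := hz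
    exact absurd (hz.trans (Equiv.Perm.SameCycle.of_commute hcomm hy).symm) hx

/-- If the orbit of a point `x` under an element `σ` of the hyperoctahedral group has odd
cardinality, then `ι x` is not in the orbit of `x`; in particular the block projection
`(i, b) ↦ i` is injective on the orbit of `x`. -/
theorem odd_orbit_hyperoctahedral (n : ℕ) (hn : 1 ≤ n)
    (σ : Equiv.Perm (Fin n × Bool)) (hσ : σ ∈ hyperoctahedralGroup n) (x : Fin n × Bool)
    (hodd : Odd (Set.ncard {y | ∃ k : ℤ, (σ ^ k) x = y})) :
    hyperoctahedralInvolution n x ∉ {y | ∃ k : ℤ, (σ ^ k) x = y} ∧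
      Set.InjOn Prod.fst {y | ∃ k : ℤ, (σ ^ k) x = y} :=
  odd_orbit_hyperoctahedral_general n σ hσ x hodd
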